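/- arXiv:2203.00746 — 3 statements merged into one kernel-verified Lean document; each statement's English description precedes it below -/
import Mathlib

section
/- For a random variable ξ with mean constraint |E[ξ] − u|² ≤ γ₁·Σ and second moment constraint E[(ξ−u)²] ≤ γ₂·Σ, where Σ > 0 and 0 ≤ γ₁ ≤ γ₂, the worst-case (over all such distributions) expectation of the linear function ξ ↦ a·ξ + b satisfies sup E[a·ξ + b] = a·u + |a|·sqrt(γ₁·Σ) + b. -/
/-!
The expectation of `a·ξ + b` depends only on the mean `m = E[ξ]`, being `a·m + b`, and the
second-moment constraint is implied by the mean constraint for Dirac measures since `γ₁ ≤ γ₂`.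
So the supremum is that of `a·m + b` over `|m - u| ≤ √(γ₁Σ)`, attained by the Dirac mass at
`m = u ± √(γ₁Σ)` with the sign of `a`.
-/

open MeasureTheory

lemma integral_mul_add_const {Ω : Type*} [MeasurableSpace Ω] {μ : Measure Ω}
    [IsProbabilityMeasure μ] {X : Ω → ℝ} (hX : Integrable X μ) (a b : ℝ) :
    ∫ ω, a * X ω + b ∂μ = a * ∫ ω, X ω ∂μ + b := by
  rw [integral_add (hX.const_mul a) (integrable_const b), integral_const_mul, integral_const,
    probReal_univ, one_smul]

lemma mul_le_abs_mul_sqrt_of_sq_le (a : ℝ) {t c : ℝ} (h : t ^ 2 ≤ c) : a * t ≤ |a| * √c :=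
  calc a * t ≤ |a| * |t| := (le_abs_self _).trans_eq (abs_mul a t)
    _ ≤ |a| * √c := mul_le_mul_of_nonneg_left (Real.abs_le_sqrt h) (abs_nonneg a)

lemma exists_sq_eq_and_mul_eq_abs_mul_sqrt (a : ℝ) {c : ℝ} (hc : 0 ≤ c) :
    ∃ t : ℝ, t ^ 2 = c ∧ a * t = |a| * √c := by
  rcases le_total 0 a with ha | ha
  · exact ⟨√c, Real.sq_sqrt hc, by rw [abs_of_nonneg ha]⟩
  · exact ⟨-√c, by rw [neg_sq, Real.sq_sqrt hc], by rw [abs_of_nonpos ha]; ring⟩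

/-- Worst-case expectation of an affine function over the moment ambiguity set:
`sup E[a·ξ + b] = a·u + |a|·√(γ₁Sg) + b`. -/
theorem worst_case_affine_expectation (u Sg γ₁ γ₂ a b : ℝ)
    (hSg : 0 < Sg) (hγ₁ : 0 ≤ γ₁) (hγ : γ₁ ≤ γ₂) :
    sSup {y : ℝ | ∃ μ : Measure ℝ, IsProbabilityMeasure μ ∧
        Integrable (fun x => x) μ ∧
        Integrable (fun x => (x - u) ^ 2) μ ∧
        ((∫ x, x ∂μ) - u) ^ 2 ≤ γ₁ * Sg ∧
        (∫ x, (x - u) ^ 2 ∂μ) ≤ γ₂ * Sg ∧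
        y = ∫ x, a * x + b ∂μ}
      = a * u + |a| * Real.sqrt (γ₁ * Sg) + b := by
  refine IsGreatest.csSup_eq ⟨?_, ?_⟩
  · obtain ⟨t, ht, hat⟩ := exists_sq_eq_and_mul_eq_abs_mul_sqrt a (mul_nonneg hγ₁ hSg.le)
    have hγSg : γ₁ * Sg ≤ γ₂ * Sg := mul_le_mul_of_nonneg_right hγ hSg.le
    refine ⟨Measure.dirac (u + t), inferInstance, integrable_dirac enorm_lt_top,
      integrable_dirac enorm_lt_top, ?_, ?_, ?_⟩ <;>
    simp only [integral_dirac, add_sub_cancel_left]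
    · exact ht.le
    · exact ht.trans_le hγSg
    · rw [← hat]; ring
  · rintro y ⟨μ, hμ, hX, -, hmean, -, rfl⟩
    rw [integral_mul_add_const hX]
    linarith [mul_le_abs_mul_sqrt_of_sq_le a hmean]
end

section
/- Let γ₁, γ₂, ε be reals with 0 ≤ γ₁ ≤ γ₂, γ₂ ≥ 1, and ε ∈ (0,1). Define l₁ = sqrt(γ₁) + sqrt((1−ε)(γ₂−γ₁)/ε) and l₂ = sqrt(γ₂/ε). Then if γ₁/γ₂ ≤ ε, one has l₁ ≤ l₂, i.e., the safety-factor coefficient in the chance-constraint reformulation with ambiguous moments is no larger in the regime γ₁/γ₂ ≤ ε than the coefficient sqrt(γ₂/ε) used when γ₁/γ₂ > ε. -/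
/-- Comparison of the two safety-factor coefficients in the chance-constraint
reformulation: in the regime `γ₁/γ₂ ≤ ε` one has `l₁ ≤ l₂`. -/
theorem safety_factor_comparison (γ₁ γ₂ ε : ℝ)
    (h₁ : 0 ≤ γ₁) (h₁₂ : γ₁ ≤ γ₂) (h₂ : 1 ≤ γ₂)
    (hε : ε ∈ Set.Ioo (0 : ℝ) 1) (hreg : γ₁ / γ₂ ≤ ε) :
    Real.sqrt γ₁ + Real.sqrt ((1 - ε) * (γ₂ - γ₁) / ε) ≤ Real.sqrt (γ₂ / ε) := by
  obtain ⟨hε0, hε1⟩ := hε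
  have hγ₂ : (0:ℝ) < γ₂ := by linarith
  have hγ₁ε : γ₁ ≤ ε * γ₂ := by
    have := (div_le_iff₀ hγ₂).mp hreg
    linarith
  set b : ℝ := (1 - ε) * (γ₂ - γ₁) / ε with hb_def
  have hb : 0 ≤ b := by
    apply div_nonneg _ hε0.le
    nlinarith
  set R : ℝ := γ₂ / ε - γ₁ - b with hR_def
  have hRval : R = (γ₁ * (1 - 2*ε) + ε * γ₂) / ε := by
    rw [hR_def, hb_def]
    field_simp
    ring
  have hR0 : 0 ≤ R := by
    rw [hRval]
    apply div_nonneg _ hε0.le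
    nlinarith
  have hkey : γ₁ * b ≤ (R / 2) ^ 2 := by
    have h : (R / 2) ^ 2 - γ₁ * b = (γ₁ - ε * γ₂)^2 / (4 * ε^2) := by
      rw [hRval, hb_def]
      field_simp
      ring
    nlinarith [sq_nonneg (γ₁ - ε * γ₂), sq_nonneg ε, div_nonneg (sq_nonneg (γ₁ - ε * γ₂)) (by positivity : (0:ℝ) ≤ 4 * ε^2)]
  have hsqrtb : Real.sqrt γ₁ * Real.sqrt b ≤ R / 2 := by
    rw [← Real.sqrt_mul h₁]
    calc Real.sqrt (γ₁ * b) ≤ Real.sqrt ((R/2)^2) := Real.sqrt_le_sqrt hkey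
    _ = R / 2 := Real.sqrt_sq (div_nonneg hR0 (by norm_num))
  have hsum0 : 0 ≤ Real.sqrt γ₁ + Real.sqrt b := by positivity
  rw [show γ₂ / ε = γ₁ + b + R by rw [hR_def]; ring]
  apply Real.le_sqrt_of_sq_le
  have e1 : Real.sqrt γ₁ ^ 2 = γ₁ := Real.sq_sqrt h₁
  have e2 : Real.sqrt b ^ 2 = b := Real.sq_sqrt hb
  have expand : (Real.sqrt γ₁ + Real.sqrt b) ^ 2 = γ₁ + b + 2 * (Real.sqrt γ₁ * Real.sqrt b) := by
    rw [add_sq, e1, e2]; ring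
  rw [expand]
  clear_value b R
  linarith [hsqrtb]
end

section
/- Under the assumptions η_G > η_M^h > 0, p_ig > 0, m_g ≥ 0, and H ≥ 0, the four linear inequalities: (i) p_ig·H − η_G·m_g ≤ 0, (ii) η_M^h·m_g − p_ig·H ≤ 0, (iii) η_G·m_g − p_ig·H − G_MT^max·p_ig·(η_G − η_M^h) ≤ 0, (iv) p_ig·H − η_M^h·m_g − G_GF^max·p_ig·(η_G − η_M^h) ≤ 0, are together equivalent to the existence of α_d ∈ [0,1] with α_d·(m_g/p_ig) ≤ G_MT^max, (1−α_d)·(m_g/p_ig) ≤ G_GF^max, and [α_d·η_M^h + (1−α_d)·η_G]·(m_g/p_ig) = H. -/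
/-- Elimination of the dispatch factor: the four linear inequalities are
equivalent to the existence of `α ∈ [0,1]` satisfying heat balance and
capacity limits of micro turbine and gas furnace. -/
theorem dispatch_factor_elimination
    (mg pig H ηG ηM GMT GGF : ℝ)
    (hpig : 0 < pig) (hmg : 0 ≤ mg) (hH : 0 ≤ H)
    (hηM : 0 < ηM) (hη : ηM < ηG) (hGMT : 0 ≤ GMT) (hGGF : 0 ≤ GGF) :
    (pig * H - ηG * mg ≤ 0 ∧
     ηM * mg - pig * H ≤ 0 ∧
     ηG * mg - pig * H - GMT * pig * (ηG - ηM) ≤ 0 ∧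
     pig * H - ηM * mg - GGF * pig * (ηG - ηM) ≤ 0) ↔
    (∃ α : ℝ, 0 ≤ α ∧ α ≤ 1 ∧
        α * (mg / pig) ≤ GMT ∧
        (1 - α) * (mg / pig) ≤ GGF ∧
        (α * ηM + (1 - α) * ηG) * (mg / pig) = H) := by
  have hd : 0 < ηG - ηM := by linarith
  constructor
  · rintro ⟨h1, h2, h3, h4⟩
    rcases eq_or_lt_of_le hmg with hmg0 | hmg0
    · have hH0 : H = 0 := by nlinarith
      exact ⟨0, le_refl 0, zero_le_one, by simpa [← hmg0] using hGMT,
        by simpa [← hmg0] using hGGF, by simp [← hmg0, hH0]⟩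
    · refine ⟨(ηG * mg - pig * H) / (mg * (ηG - ηM)), ?_, ?_, ?_, ?_, ?_⟩
      · apply div_nonneg (by linarith) (by positivity)
      · rw [div_le_one (by positivity)]; nlinarith
      · rw [div_mul_div_comm, div_le_iff₀ (by positivity)]
        have : (ηG * mg - pig * H) * mg ≤ GMT * pig * (ηG - ηM) * mg :=
          mul_le_mul_of_nonneg_right (by linarith) hmg
        nlinarith
      · have hα : 1 - (ηG * mg - pig * H) / (mg * (ηG - ηM))
            = (pig * H - ηM * mg) / (mg * (ηG - ηM)) := by
          field_simp; ring
        rw [hα, div_mul_div_comm, div_le_iff₀ (by positivity)]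
        nlinarith [mul_le_mul_of_nonneg_right (show pig * H - ηM * mg ≤ GGF * pig * (ηG - ηM) by linarith) hmg]
      · field_simp; ring
  · rintro ⟨α, hα0, hα1, hc1, hc2, hbal⟩
    have hkey : pig * H = (α * ηM + (1 - α) * ηG) * mg := by
      rw [← hbal]; field_simp
    have hc1' : α * mg ≤ GMT * pig := by
      have h := mul_le_mul_of_nonneg_right hc1 hpig.le
      have e : α * (mg / pig) * pig = α * mg := by field_simp
      linarith [e ▸ h]
    have hc2' : (1 - α) * mg ≤ GGF * pig := by
      have h := mul_le_mul_of_nonneg_right hc2 hpig.le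
      have e : (1 - α) * (mg / pig) * pig = (1 - α) * mg := by field_simp
      linarith [e ▸ h]
    refine ⟨by nlinarith [mul_nonneg (mul_nonneg hα0 hmg) hd.le],
      by nlinarith [mul_nonneg (mul_nonneg (sub_nonneg.2 hα1) hmg) hd.le],
      by nlinarith [mul_le_mul_of_nonneg_right hc1' hd.le],
      by nlinarith [mul_le_mul_of_nonneg_right hc2' hd.le]⟩
end
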